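/- arXiv:1802.09888 — 8 statements merged into one kernel-verified Lean document; each statement's English description precedes it below -/
import Mathlib

section
/- If ψₙ and φₙ are nonnegative real sequences, φₙ ∈ (0,1) for all n, ∑ φₙ = ∞, and ψ_{n+1} ≤ (1-φₙ)ψₙ + εₙ where εₙ ≥ 0 and εₙ/φₙ → 0, then ψₙ → 0. -/
open Filter Topology Finset

lemma le_mul_exp_neg_sum_Ico_of_le_one_sub_mul {u φ : ℕ → ℝ} {N : ℕ} (hu : ∀ n, 0 ≤ u n)
    (hrec : ∀ n ≥ N, u (n + 1) ≤ (1 - φ n) * u n) :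
    ∀ n ≥ N, u n ≤ u N * Real.exp (-∑ k ∈ Ico N n, φ k) := by
  refine Nat.le_induction (by simp) fun n hn ih => ?_
  have h_one_sub_le_exp : 1 - φ n ≤ Real.exp (-φ n) := by
    linarith [Real.add_one_le_exp (-φ n)]
  calc u (n + 1) ≤ (1 - φ n) * u n := hrec n hn
    _ ≤ Real.exp (-φ n) * u n := mul_le_mul_of_nonneg_right h_one_sub_le_exp (hu n)
    _ ≤ Real.exp (-φ n) * (u N * Real.exp (-∑ k ∈ Ico N n, φ k)) := by gcongr
    _ = u N * Real.exp (-∑ k ∈ Ico N (n + 1), φ k) := by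
      rw [sum_Ico_succ_top hn, neg_add, Real.exp_add]; ring

lemma tendsto_zero_of_le_one_sub_mul {u φ : ℕ → ℝ} (hu : ∀ n, 0 ≤ u n)
    (hdiv : Tendsto (fun N => ∑ k ∈ range N, φ k) atTop atTop)
    (hrec : ∀ᶠ n in atTop, u (n + 1) ≤ (1 - φ n) * u n) :
    Tendsto u atTop (𝓝 0) := by
  obtain ⟨N, hN⟩ := eventually_atTop.mp hrec
  have h_tail : Tendsto (fun n => ∑ k ∈ Ico N n, φ k) atTop atTop := by
    refine (tendsto_atTop_add_const_right _ (-∑ k ∈ range N, φ k) hdiv).congr' ?_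
    filter_upwards [eventually_ge_atTop N] with n hn
    rw [sum_Ico_eq_sub _ hn, sub_eq_add_neg]
  have h_bound : Tendsto (fun n => u N * Real.exp (-∑ k ∈ Ico N n, φ k)) atTop (𝓝 0) := by
    simpa using (Real.tendsto_exp_neg_atTop_nhds_zero.comp h_tail).const_mul (u N)
  refine squeeze_zero' (Eventually.of_forall hu) ?_ h_bound
  filter_upwards [eventually_ge_atTop N] with n hn
  exact le_mul_exp_neg_sum_Ico_of_le_one_sub_mul hu hN n hn

lemma max_sub_zero_le_one_sub_mul {x y φ ε δ : ℝ} (hφ : φ ≤ 1) (hε : ε ≤ δ * φ)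
    (h : y ≤ (1 - φ) * x + ε) : max (y - δ) 0 ≤ (1 - φ) * max (x - δ) 0 := by
  have hφ' : 0 ≤ 1 - φ := by linarith
  refine max_le ?_ (mul_nonneg hφ' (le_max_right _ _))
  calc y - δ ≤ (1 - φ) * (x - δ) := by linarith
    _ ≤ (1 - φ) * max (x - δ) 0 := mul_le_mul_of_nonneg_left (le_max_left _ _) hφ'

theorem stmt_0_general (ψ φ ε : ℕ → ℝ)
    (hψ : ∀ n, 0 ≤ ψ n) (hφ : ∀ n, φ n ∈ Set.Ioo (0:ℝ) 1)
    (hdiv : Tendsto (fun N => ∑ k ∈ Finset.range N, φ k) atTop atTop)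
    (hrec : ∀ n, ψ (n + 1) ≤ (1 - φ n) * ψ n + ε n)
    (hlim : Tendsto (fun n => ε n / φ n) atTop (nhds 0)) :
    Tendsto ψ atTop (nhds 0) := by
  -- Above the level `δ`, the error `ε n ≤ φ n * δ` is absorbed by the contraction.
  have h_eventually_lt : ∀ δ > 0, ∀ᶠ n in atTop, ψ n < 2 * δ := by
    intro δ hδ
    have h_excess : Tendsto (fun n => max (ψ n - δ) 0) atTop (𝓝 0) := by
      refine tendsto_zero_of_le_one_sub_mul (fun n => le_max_right _ _) hdiv ?_
      filter_upwards [hlim.eventually (gt_mem_nhds hδ)] with n hn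
      exact max_sub_zero_le_one_sub_mul (hφ n).2.le
        ((div_lt_iff₀ (hφ n).1).mp hn).le (hrec n)
    filter_upwards [h_excess.eventually (gt_mem_nhds hδ)] with n hn
    linarith [le_max_left (ψ n - δ) 0]
  refine tendsto_order.2 ⟨fun a ha => Eventually.of_forall fun n => ha.trans_le (hψ n),
    fun b hb => ?_⟩
  exact (h_eventually_lt (b / 2) (half_pos hb)).mono fun n hn => by linarith

theorem stmt_0 (ψ φ ε : ℕ → ℝ)
    (hψ : ∀ n, 0 ≤ ψ n) (hφ : ∀ n, φ n ∈ Set.Ioo (0:ℝ) 1)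
    (hε : ∀ n, 0 ≤ ε n)
    (hdiv : Tendsto (fun N => ∑ k ∈ Finset.range N, φ k) atTop atTop)
    (hrec : ∀ n, ψ (n + 1) ≤ (1 - φ n) * ψ n + ε n)
    (hlim : Tendsto (fun n => ε n / φ n) atTop (nhds 0)) :
    Tendsto ψ atTop (nhds 0) :=
  stmt_0_general ψ φ ε hψ hφ hdiv hrec hlim
end

section
/- Let T : C → C be a contraction with constant θ ∈ (0,1) on a nonempty closed convex subset C of a Banach space, with fixed point p. For the K iteration xₙ₊₁ = T(yₙ), yₙ = T((1-αₙ)Txₙ + αₙTzₙ), zₙ = (1-βₙ)xₙ + βₙTxₙ, one has ‖xₙ₊₁ - p‖ ≤ θ³(1 - αₙβₙ(1-θ))‖xₙ - p‖ for every n. -/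
/-!
Distances to the fixed point `p` are measured through the three nested layers of `T` in a K step
(the innermost being `Txₙ` and `Tzₙ` side by side): each layer contributes a factor `θ`, and the
convex combinations do not increase the distance, since the norm is convex. The only further
saving comes from `zₙ`, which is closer to `p` than `xₙ` by the factor `1 - βₙ(1 - θ)`; it enters
the outer combination with weight `αₙ`, which gives `1 - αₙβₙ(1 - θ)`.
-/

open Set

theorem norm_smul_add_smul_sub_le {X : Type*} [NormedAddCommGroup X] [NormedSpace ℝ X]
    (a b p : X) {t : ℝ} (ht : t ∈ Icc (0 : ℝ) 1) :
    ‖(1 - t) • a + t • b - p‖ ≤ (1 - t) * ‖a - p‖ + t * ‖b - p‖ := by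
  rw [show (1 - t) • a + t • b - p = (1 - t) • (a - p) + t • (b - p) by module]
  exact convexOn_univ_norm.2 trivial trivial (by linarith [ht.2]) ht.1 (by ring)

theorem norm_apply_sub_fixedPoint_le {X : Type*} [SeminormedAddCommGroup X] {C : Set X}
    {T : X → X} {θ : ℝ} {p x : X} (hT : ∀ x ∈ C, ∀ y ∈ C, ‖T x - T y‖ ≤ θ * ‖x - y‖)
    (hpC : p ∈ C) (hp : T p = p) (hx : x ∈ C) : ‖T x - p‖ ≤ θ * ‖x - p‖ := by
  simpa only [hp] using hT x hx p hpC

section KIteration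

variable {X : Type*} [NormedAddCommGroup X] [NormedSpace ℝ X]
  {C : Set X} {T : X → X} {θ : ℝ} {p : X} {a b : ℝ} {x : X}

def mannStep (T : X → X) (b : ℝ) (x : X) : X :=
  (1 - b) • x + b • T x

def kStep (T : X → X) (a b : ℝ) (x : X) : X :=
  T (T ((1 - a) • T x + a • T (mannStep T b x)))

theorem mannStep_mem (hCcv : Convex ℝ C) (hTC : ∀ x ∈ C, T x ∈ C)
    (hb : b ∈ Icc (0 : ℝ) 1) (hx : x ∈ C) : mannStep T b x ∈ C :=
  hCcv hx (hTC x hx) (by linarith [hb.2]) hb.1 (by ring)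

theorem kStep_mem (hCcv : Convex ℝ C) (hTC : ∀ x ∈ C, T x ∈ C)
    (ha : a ∈ Icc (0 : ℝ) 1) (hb : b ∈ Icc (0 : ℝ) 1) (hx : x ∈ C) : kStep T a b x ∈ C :=
  hTC _ <| hTC _ <| hCcv (hTC x hx) (hTC _ (mannStep_mem hCcv hTC hb hx))
    (by linarith [ha.2]) ha.1 (by ring)

variable (hT : ∀ x ∈ C, ∀ y ∈ C, ‖T x - T y‖ ≤ θ * ‖x - y‖) (hpC : p ∈ C) (hp : T p = p)
include hT hpC hp

theorem norm_mannStep_sub_le (hb : b ∈ Icc (0 : ℝ) 1) (hx : x ∈ C) :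
    ‖mannStep T b x - p‖ ≤ (1 - b * (1 - θ)) * ‖x - p‖ :=
  calc ‖mannStep T b x - p‖ ≤ (1 - b) * ‖x - p‖ + b * ‖T x - p‖ :=
        norm_smul_add_smul_sub_le _ _ _ hb
    _ ≤ (1 - b) * ‖x - p‖ + b * (θ * ‖x - p‖) := by
        gcongr
        · exact hb.1
        · exact norm_apply_sub_fixedPoint_le hT hpC hp hx
    _ = (1 - b * (1 - θ)) * ‖x - p‖ := by ring

theorem norm_kStep_sub_le (hCcv : Convex ℝ C) (hTC : ∀ x ∈ C, T x ∈ C) (hθ : 0 ≤ θ)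
    (ha : a ∈ Icc (0 : ℝ) 1) (hb : b ∈ Icc (0 : ℝ) 1) (hx : x ∈ C) :
    ‖kStep T a b x - p‖ ≤ θ ^ 3 * (1 - a * b * (1 - θ)) * ‖x - p‖ := by
  have hz := mannStep_mem hCcv hTC hb hx
  set w := (1 - a) • T x + a • T (mannStep T b x)
  have hw : w ∈ C := hCcv (hTC x hx) (hTC _ hz) (by linarith [ha.2]) ha.1 (by ring)
  have hTx := norm_apply_sub_fixedPoint_le hT hpC hp hx
  have hTz := (norm_apply_sub_fixedPoint_le hT hpC hp hz).trans
    (mul_le_mul_of_nonneg_left (norm_mannStep_sub_le hT hpC hp hb hx) hθ)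
  have hw_le : ‖w - p‖ ≤ θ * (1 - a * b * (1 - θ)) * ‖x - p‖ :=
    calc ‖w - p‖ ≤ (1 - a) * ‖T x - p‖ + a * ‖T (mannStep T b x) - p‖ :=
          norm_smul_add_smul_sub_le _ _ _ ha
      _ ≤ (1 - a) * (θ * ‖x - p‖) + a * (θ * ((1 - b * (1 - θ)) * ‖x - p‖)) := by
          gcongr
          · linarith [ha.2]
          · exact ha.1
      _ = θ * (1 - a * b * (1 - θ)) * ‖x - p‖ := by ring
  calc ‖kStep T a b x - p‖ ≤ θ * ‖T w - p‖ :=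
        norm_apply_sub_fixedPoint_le hT hpC hp (hTC w hw)
    _ ≤ θ * (θ * ‖w - p‖) := by gcongr; exact norm_apply_sub_fixedPoint_le hT hpC hp hw
    _ ≤ θ * (θ * (θ * (1 - a * b * (1 - θ)) * ‖x - p‖)) := by gcongr
    _ = θ ^ 3 * (1 - a * b * (1 - θ)) * ‖x - p‖ := by ring

end KIteration

theorem stmt_2_general {X : Type*} [NormedAddCommGroup X] [NormedSpace ℝ X]
    (C : Set X) (hCcv : Convex ℝ C)
    (T : X → X) (hTC : ∀ x ∈ C, T x ∈ C) (θ : ℝ) (hθ : θ ∈ Set.Ioo (0:ℝ) 1)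
    (hT : ∀ x ∈ C, ∀ y ∈ C, ‖T x - T y‖ ≤ θ * ‖x - y‖)
    (p : X) (hpC : p ∈ C) (hp : T p = p)
    (α β : ℕ → ℝ) (hα : ∀ n, α n ∈ Set.Icc (0:ℝ) 1) (hβ : ∀ n, β n ∈ Set.Icc (0:ℝ) 1)
    (x z y : ℕ → X) (hx0 : x 0 ∈ C)
    (hz : ∀ n, z n = (1 - β n) • x n + β n • T (x n))
    (hy : ∀ n, y n = T ((1 - α n) • T (x n) + α n • T (z n)))
    (hx : ∀ n, x (n + 1) = T (y n)) :
    ∀ n, ‖x (n + 1) - p‖ ≤ θ ^ 3 * (1 - α n * β n * (1 - θ)) * ‖x n - p‖ := by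
  have hstep : ∀ n, x (n + 1) = kStep T (α n) (β n) (x n) := fun n => by
    rw [hx, hy, hz]; rfl
  have hmem : ∀ n, x n ∈ C := by
    intro n
    induction n with
    | zero => exact hx0
    | succ n ih => rw [hstep]; exact kStep_mem hCcv hTC (hα n) (hβ n) ih
  intro n
  rw [hstep]
  exact norm_kStep_sub_le hT hpC hp hCcv hTC hθ.1.le (hα n) (hβ n) (hmem n)

theorem stmt_2 {X : Type*} [NormedAddCommGroup X] [NormedSpace ℝ X] [CompleteSpace X]
    (C : Set X) (hCne : C.Nonempty) (hCcl : IsClosed C) (hCcv : Convex ℝ C)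
    (T : X → X) (hTC : ∀ x ∈ C, T x ∈ C) (θ : ℝ) (hθ : θ ∈ Set.Ioo (0:ℝ) 1)
    (hT : ∀ x ∈ C, ∀ y ∈ C, ‖T x - T y‖ ≤ θ * ‖x - y‖)
    (p : X) (hpC : p ∈ C) (hp : T p = p)
    (α β : ℕ → ℝ) (hα : ∀ n, α n ∈ Set.Icc (0:ℝ) 1) (hβ : ∀ n, β n ∈ Set.Icc (0:ℝ) 1)
    (x z y : ℕ → X) (hx0 : x 0 ∈ C)
    (hz : ∀ n, z n = (1 - β n) • x n + β n • T (x n))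
    (hy : ∀ n, y n = T ((1 - α n) • T (x n) + α n • T (z n)))
    (hx : ∀ n, x (n + 1) = T (y n)) :
    ∀ n, ‖x (n + 1) - p‖ ≤ θ ^ 3 * (1 - α n * β n * (1 - θ)) * ‖x n - p‖ :=
  stmt_2_general C hCcv T hTC θ hθ hT p hpC hp α β hα hβ x z y hx0 hz hy hx
end

section
/- If T : C → C satisfies Suzuki's condition (C), then for all x, y ∈ C, ‖x - Ty‖ ≤ 3‖Tx - x‖ + ‖x - y‖. -/
/-!
If `x` is far from `y` compared with its displacement `‖x - T x‖`, condition (C) at `x` bounds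
`‖T x - T y‖` directly. Otherwise `y` is close to `x`, hence far from `T x`, and condition (C) at
`T x` bounds `‖T (T x) - T y‖`; the path `x → T x → T (T x) → T y` then costs at most
`3 ‖x - T x‖ + ‖x - y‖`.
-/

section

variable {E : Type*} [SeminormedAddCommGroup E]

def SuzukiCondition (C : Set E) (T : E → E) : Prop :=
  ∀ x ∈ C, ∀ y ∈ C, (1 / 2) * ‖x - T x‖ ≤ ‖x - y‖ → ‖T x - T y‖ ≤ ‖x - y‖

namespace SuzukiCondition

variable {C : Set E} {T : E → E} {x y : E}

theorem norm_map_sub_map_map_le (hT : SuzukiCondition C T) (hx : x ∈ C) (hTx : T x ∈ C) :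
    ‖T x - T (T x)‖ ≤ ‖x - T x‖ :=
  hT x hx (T x) hTx (by linarith [norm_nonneg (x - T x)])

theorem norm_sub_map_le (hT : SuzukiCondition C T) (hx : x ∈ C) (hTx : T x ∈ C) (hy : y ∈ C) :
    ‖x - T y‖ ≤ 3 * ‖x - T x‖ + ‖x - y‖ := by
  have hxTx := norm_nonneg (x - T x)
  have htri_x := norm_sub_le_norm_sub_add_norm_sub x (T x) (T y)
  by_cases hfar : (1 / 2) * ‖x - T x‖ ≤ ‖x - y‖
  · linarith [hT x hx y hy hfar]
  · have hTx_far : (1 / 2) * ‖x - T x‖ ≤ ‖T x - y‖ := by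
      linarith [not_le.mp hfar, norm_sub_le_norm_sub_add_norm_sub x y (T x), norm_sub_rev y (T x)]
    have hstep := hT.norm_map_sub_map_map_le hx hTx
    have hTTx : ‖T (T x) - T y‖ ≤ ‖T x - y‖ := hT (T x) hTx y hy (by linarith)
    calc ‖x - T y‖ ≤ ‖x - T x‖ + ‖T x - T (T x)‖ + ‖T (T x) - T y‖ := by
          linarith [norm_sub_le_norm_sub_add_norm_sub (T x) (T (T x)) (T y)]
      _ ≤ 2 * ‖x - T x‖ + ‖T x - y‖ := by linarith
      _ ≤ 3 * ‖x - T x‖ + ‖x - y‖ := by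
          linarith [norm_sub_le_norm_sub_add_norm_sub (T x) x y, norm_sub_rev (T x) x]

end SuzukiCondition

end

theorem stmt_8_general {X : Type*} [NormedAddCommGroup X]
    (C : Set X) (T : X → X) (hTC : ∀ x ∈ C, T x ∈ C)
    (hC : ∀ x ∈ C, ∀ y ∈ C, (1 / 2) * ‖x - T x‖ ≤ ‖x - y‖ → ‖T x - T y‖ ≤ ‖x - y‖) :
    ∀ x ∈ C, ∀ y ∈ C, ‖x - T y‖ ≤ 3 * ‖T x - x‖ + ‖x - y‖ := by
  intro x hx y hy
  rw [norm_sub_rev (T x)]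
  exact SuzukiCondition.norm_sub_map_le hC hx (hTC x hx) hy

theorem stmt_8 {X : Type*} [NormedAddCommGroup X] [NormedSpace ℝ X]
    (C : Set X) (hCne : C.Nonempty) (T : X → X) (hTC : ∀ x ∈ C, T x ∈ C)
    (hC : ∀ x ∈ C, ∀ y ∈ C, (1 / 2) * ‖x - T x‖ ≤ ‖x - y‖ → ‖T x - T y‖ ≤ ‖x - y‖) :
    ∀ x ∈ C, ∀ y ∈ C, ‖x - T y‖ ≤ 3 * ‖T x - x‖ + ‖x - y‖ :=
  stmt_8_general C T hTC hC
end

section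
/- Let T : C → C satisfy condition (C) with a fixed point p, where C is a nonempty closed convex subset of a Banach space. For the K iteration (xₙ) with αₙ, βₙ ∈ [0,1], the sequence ‖xₙ - p‖ is nonincreasing, hence limₙ ‖xₙ - p‖ exists. -/
open Filter

private lemma comb_norm {X : Type*} [NormedAddCommGroup X] [NormedSpace ℝ X]
    (a : ℝ) (ha : 0 ≤ a) (ha1 : a ≤ 1) (u v p : X) :
    ‖(1 - a) • u + a • v - p‖ ≤ (1 - a) * ‖u - p‖ + a * ‖v - p‖ := by
  have h : (1 - a) • u + a • v - p = (1 - a) • (u - p) + a • (v - p) := by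
    module
  rw [h]
  calc ‖(1 - a) • (u - p) + a • (v - p)‖
      ≤ ‖(1 - a) • (u - p)‖ + ‖a • (v - p)‖ := norm_add_le _ _
    _ = (1 - a) * ‖u - p‖ + a * ‖v - p‖ := by
        rw [norm_smul, norm_smul, Real.norm_of_nonneg (by linarith), Real.norm_of_nonneg ha]

theorem stmt_9 {X : Type*} [NormedAddCommGroup X] [NormedSpace ℝ X] [CompleteSpace X]
    (C : Set X) (hCne : C.Nonempty) (hCcl : IsClosed C) (hCcv : Convex ℝ C)
    (T : X → X) (hTC : ∀ x ∈ C, T x ∈ C)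
    (hC : ∀ x ∈ C, ∀ y ∈ C, (1 / 2) * ‖x - T x‖ ≤ ‖x - y‖ → ‖T x - T y‖ ≤ ‖x - y‖)
    (p : X) (hpC : p ∈ C) (hp : T p = p)
    (α β : ℕ → ℝ) (hα : ∀ n, α n ∈ Set.Icc (0:ℝ) 1) (hβ : ∀ n, β n ∈ Set.Icc (0:ℝ) 1)
    (x z y : ℕ → X) (hx0 : x 0 ∈ C)
    (hz : ∀ n, z n = (1 - β n) • x n + β n • T (x n))
    (hy : ∀ n, y n = T ((1 - α n) • T (x n) + α n • T (z n)))
    (hx : ∀ n, x (n + 1) = T (y n)) :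
    (∀ n, ‖x (n + 1) - p‖ ≤ ‖x n - p‖) ∧
      ∃ l : ℝ, Tendsto (fun n => ‖x n - p‖) atTop (nhds l) := by
  -- For any q ∈ C, ‖T q - p‖ ≤ ‖q - p‖
  have hTq : ∀ q ∈ C, ‖T q - p‖ ≤ ‖q - p‖ := by
    intro q hq
    have h := hC p hpC q hq (by
      rw [hp, sub_self, norm_zero, mul_zero]
      exact norm_nonneg _)
    rw [hp] at h
    rw [norm_sub_rev p q, norm_sub_rev p (T q)] at h
    exact h
  -- convex combination membership helper
  have hcomb : ∀ (a : ℝ), 0 ≤ a → a ≤ 1 → ∀ u ∈ C, ∀ v ∈ C, (1 - a) • u + a • v ∈ C := by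
    intro a ha ha1 u hu v hv
    exact hCcv hu hv (by linarith) ha (by ring)
  -- membership of all iterates
  have hmem : ∀ n, x n ∈ C := by
    intro n
    induction n with
    | zero => exact hx0
    | succ n ih =>
        rw [hx n, hy n]
        exact hTC _ (hTC _ (hcomb _ (hα n).1 (hα n).2 _ (hTC _ ih) _
          (hTC _ (by rw [hz n]; exact hcomb _ (hβ n).1 (hβ n).2 _ ih _ (hTC _ ih)))))
  have key : ∀ n, ‖x (n + 1) - p‖ ≤ ‖x n - p‖ := by
    intro n
    have hxn := hmem n
    have hTxn := hTC _ hxn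
    have hzn : z n ∈ C := by rw [hz n]; exact hcomb _ (hβ n).1 (hβ n).2 _ hxn _ hTxn
    have hTzn := hTC _ hzn
    have hwn : (1 - α n) • T (x n) + α n • T (z n) ∈ C :=
      hcomb _ (hα n).1 (hα n).2 _ hTxn _ hTzn
    have hyn : y n ∈ C := by rw [hy n]; exact hTC _ hwn
    -- bounds
    have b1 : ‖z n - p‖ ≤ ‖x n - p‖ := by
      rw [hz n]
      calc ‖(1 - β n) • x n + β n • T (x n) - p‖
          ≤ (1 - β n) * ‖x n - p‖ + β n * ‖T (x n) - p‖ :=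
            comb_norm _ (hβ n).1 (hβ n).2 _ _ _
        _ ≤ (1 - β n) * ‖x n - p‖ + β n * ‖x n - p‖ := by
            have := hTq _ hxn
            nlinarith [(hβ n).1]
        _ = ‖x n - p‖ := by ring
    have b2 : ‖y n - p‖ ≤ ‖x n - p‖ := by
      rw [hy n]
      calc ‖T ((1 - α n) • T (x n) + α n • T (z n)) - p‖
          ≤ ‖(1 - α n) • T (x n) + α n • T (z n) - p‖ := hTq _ hwn
        _ ≤ (1 - α n) * ‖T (x n) - p‖ + α n * ‖T (z n) - p‖ :=
            comb_norm _ (hα n).1 (hα n).2 _ _ _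
        _ ≤ (1 - α n) * ‖x n - p‖ + α n * ‖x n - p‖ := by
            have h1 := hTq _ hxn
            have h2 := hTq _ hzn
            nlinarith [(hα n).1, (hα n).2]
        _ = ‖x n - p‖ := by ring
    calc ‖x (n + 1) - p‖ = ‖T (y n) - p‖ := by rw [hx n]
      _ ≤ ‖y n - p‖ := hTq _ hyn
      _ ≤ ‖x n - p‖ := b2
  refine ⟨key, ?_⟩
  have hanti : Antitone fun n => ‖x n - p‖ := antitone_nat_of_succ_le key
  exact ⟨_, tendsto_atTop_ciInf hanti ⟨0, fun r ⟨n, hn⟩ => hn ▸ norm_nonneg _⟩⟩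
end

section
/- Let X be a uniformly convex Banach space, C ⊆ X nonempty closed convex, T : C → C satisfying condition (C) with F(T) ≠ ∅, and (xₙ) the K iteration with αₙ, βₙ ∈ [a,b], 0 < a ≤ b < 1. Then (xₙ) is bounded and ‖Txₙ - xₙ‖ → 0. -/
/-!
Condition (C) makes `T` quasi-nonexpansive around a fixed point `p`, so along the K iteration
`‖xₙ₊₁ - p‖ ≤ ‖xₙ - p‖ - αₙ (‖xₙ - p‖ - ‖zₙ - p‖)` with `‖zₙ - p‖ ≤ ‖xₙ - p‖`. Hence `‖xₙ - p‖`
decreases, and it has the same limit `c` as `‖zₙ - p‖`. Now `zₙ - p` is a convex combination, with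
weight `βₙ` bounded away from `0` and `1`, of `xₙ - p` and `Txₙ - p`, both of norm at most
`‖xₙ - p‖ → c`; by uniform convexity (Schu's lemma) this forces `‖Txₙ - xₙ‖ → 0`.
-/

open Filter Set Topology

section UniformConvexity

variable {E : Type*} [SeminormedAddCommGroup E] [NormedSpace ℝ E]

lemma norm_sub_smul_add_smul_le_sub {x y : E} {r δ s t : ℝ} (hx : ‖x‖ ≤ r) (hy : ‖y‖ ≤ r)
    (hxy : ‖x + y‖ ≤ 2 * r - δ) (hs : 0 ≤ s) (hst : s ≤ t) (hst' : s ≤ 1 - t) :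
    ‖(1 - t) • x + t • y‖ ≤ r - s * δ := by
  have hsplit : (1 - t) • x + t • y = s • (x + y) + (1 - t - s) • x + (t - s) • y := by module
  calc ‖(1 - t) • x + t • y‖ ≤ s * ‖x + y‖ + (1 - t - s) * ‖x‖ + (t - s) * ‖y‖ := by
        rw [hsplit, ← norm_smul_of_nonneg hs, ← norm_smul_of_nonneg (by linarith),
          ← norm_smul_of_nonneg (by linarith)]
        exact norm_add₃_le
    _ ≤ s * (2 * r - δ) + (1 - t - s) * r + (t - s) * r :=
        add_le_add_three (mul_le_mul_of_nonneg_left hxy hs)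
          (mul_le_mul_of_nonneg_left hx (by linarith)) (mul_le_mul_of_nonneg_left hy (by linarith))
    _ = r - s * δ := by ring

variable [UniformConvexSpace E]

/-- The modulus of uniform convexity can be chosen uniformly for all radii `r ≤ R`: the relative
separation `ε / r` stays above `ε / R`, while `r ≥ ε / 2`. -/
lemma exists_forall_closed_ball_dist_add_le_two_mul_sub_of_le {ε R : ℝ} (hε : 0 < ε)
    (hR : 0 < R) :
    ∃ δ, 0 < δ ∧ ∀ r ≤ R, ∀ ⦃x : E⦄, ‖x‖ ≤ r → ∀ ⦃y⦄, ‖y‖ ≤ r → ε ≤ ‖x - y‖ →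
      ‖x + y‖ ≤ 2 * r - δ := by
  obtain ⟨δ, hδ, h⟩ := exists_forall_closed_ball_dist_add_le_two_sub E (div_pos hε hR)
  refine ⟨δ * ε / 2, by positivity, fun r hrR x hx y hy hxy => ?_⟩
  have hεr : ε / 2 ≤ r := by linarith [norm_sub_le x y]
  have hr : 0 < r := by linarith
  have hunit : ∀ {w : E}, ‖w‖ ≤ r → ‖r⁻¹ • w‖ ≤ 1 := fun hw => by
    rw [norm_smul_of_nonneg (inv_nonneg.2 hr.le)]
    exact inv_mul_le_one_of_le₀ hw hr.le
  have hsep : ε / R ≤ ‖r⁻¹ • x - r⁻¹ • y‖ := by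
    rw [← smul_sub, norm_smul_of_nonneg (inv_nonneg.2 hr.le), inv_mul_eq_div]
    exact (div_le_div_of_nonneg_left hε.le hr hrR).trans (div_le_div_of_nonneg_right hxy hr.le)
  have hsum := h (hunit hx) (hunit hy) hsep
  rw [← smul_add, norm_smul_of_nonneg (inv_nonneg.2 hr.le), inv_mul_le_iff₀ hr] at hsum
  nlinarith [mul_le_mul_of_nonneg_left hεr hδ.le]

lemma exists_forall_norm_sub_smul_add_smul_le_sub {a b ε R : ℝ} (ha : 0 < a) (hb : b < 1)
    (hε : 0 < ε) (hR : 0 < R) :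
    ∃ η, 0 < η ∧ ∀ r ≤ R, ∀ t ∈ Icc a b, ∀ ⦃x : E⦄, ‖x‖ ≤ r → ∀ ⦃y⦄, ‖y‖ ≤ r →
      ε ≤ ‖x - y‖ → ‖(1 - t) • x + t • y‖ ≤ r - η := by
  obtain ⟨δ, hδ, h⟩ := exists_forall_closed_ball_dist_add_le_two_mul_sub_of_le (E := E) hε hR
  have hs : 0 < min a (1 - b) := lt_min ha (sub_pos.2 hb)
  refine ⟨min a (1 - b) * δ, mul_pos hs hδ, fun r hr t ht x hx y hy hxy => ?_⟩
  exact norm_sub_smul_add_smul_le_sub hx hy (h r hr hx hy hxy) hs.le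
    ((min_le_left _ _).trans ht.1) ((min_le_right _ _).trans (by linarith [ht.2]))

/-- Schu's lemma. -/
theorem tendsto_norm_sub_of_tendsto_norm_sub_smul_add_smul {ι : Type*} {l : Filter ι}
    {a b c : ℝ} (ha : 0 < a) (hb : b < 1) {t d : ι → ℝ} {u v : ι → E}
    (ht : ∀ i, t i ∈ Icc a b) (hu : ∀ i, ‖u i‖ ≤ d i) (hv : ∀ i, ‖v i‖ ≤ d i)
    (hd : Tendsto d l (𝓝 c)) (huv : Tendsto (fun i => ‖(1 - t i) • u i + t i • v i‖) l (𝓝 c)) :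
    Tendsto (fun i => ‖u i - v i‖) l (𝓝 0) := by
  have hgap : Tendsto (fun i => d i - ‖(1 - t i) • u i + t i • v i‖) l (𝓝 0) := by
    simpa using hd.sub huv
  refine tendsto_order.2 ⟨fun ε hε => Eventually.of_forall fun i => hε.trans_le (norm_nonneg _),
    fun ε hε => ?_⟩
  obtain ⟨η, hη, hcombo⟩ :=
    exists_forall_norm_sub_smul_add_smul_le_sub (E := E) ha hb hε (by positivity : 0 < |c| + 1)
  filter_upwards [hd.eventually (gt_mem_nhds (by linarith [le_abs_self c] : c < |c| + 1)),
    hgap.eventually (gt_mem_nhds hη)] with i hdi hgapi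
  by_contra! hεi
  linarith [hcombo (d i) hdi.le (t i) (ht i) (hu i) (hv i) hεi]

end UniformConvexity

lemma tendsto_of_mul_sub_le_sub {d e : ℕ → ℝ} {a c : ℝ} (ha : 0 < a) (hed : ∀ n, e n ≤ d n)
    (hstep : ∀ n, a * (d n - e n) ≤ d n - d (n + 1)) (hd : Tendsto d atTop (𝓝 c)) :
    Tendsto e atTop (𝓝 c) := by
  have hlow : Tendsto (fun n => d n - (d n - d (n + 1)) / a) atTop (𝓝 c) := by
    simpa using hd.sub ((hd.sub (hd.comp (tendsto_add_atTop_nat 1))).div_const a)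
  refine tendsto_of_tendsto_of_tendsto_of_le_of_le hlow hd (fun n => ?_) hed
  have : d n - e n ≤ (d n - d (n + 1)) / a := (le_div_iff₀ ha).2 (by linarith [hstep n])
  linarith

section KIteration

variable {X : Type*} [SeminormedAddCommGroup X] {C : Set X} {T : X → X} {p : X}

lemma norm_apply_sub_le_of_conditionC
    (hC : ∀ x ∈ C, ∀ y ∈ C, (1 / 2) * ‖x - T x‖ ≤ ‖x - y‖ → ‖T x - T y‖ ≤ ‖x - y‖)
    (hp : p ∈ C) (hTp : T p = p) {w : X} (hw : w ∈ C) : ‖T w - p‖ ≤ ‖w - p‖ := by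
  have h := hC p hp w hw (by simp [hTp])
  rwa [hTp, norm_sub_rev, norm_sub_rev p] at h

variable [NormedSpace ℝ X] {α β : ℕ → ℝ} {x z y : ℕ → X}

lemma norm_sub_smul_add_smul_sub_le {t : ℝ} (ht : t ∈ Icc (0 : ℝ) 1) (u v w : X) :
    ‖(1 - t) • u + t • v - w‖ ≤ (1 - t) * ‖u - w‖ + t * ‖v - w‖ := by
  have hsplit : (1 - t) • u + t • v - w = (1 - t) • (u - w) + t • (v - w) := by module
  rw [hsplit]
  simpa only [smul_eq_mul] using convexOn_univ_norm.2 (mem_univ (u - w)) (mem_univ (v - w))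
    (sub_nonneg.2 ht.2) ht.1 (sub_add_cancel 1 t)

lemma Convex.sub_smul_add_smul_mem (hCcv : Convex ℝ C) {u v : X} (hu : u ∈ C) (hv : v ∈ C)
    {t : ℝ} (ht : t ∈ Icc (0 : ℝ) 1) : (1 - t) • u + t • v ∈ C :=
  hCcv hu hv (sub_nonneg.2 ht.2) ht.1 (sub_add_cancel 1 t)

lemma kIteration_mem (hCcv : Convex ℝ C) (hTC : ∀ w ∈ C, T w ∈ C)
    (hα : ∀ n, α n ∈ Icc (0 : ℝ) 1) (hβ : ∀ n, β n ∈ Icc (0 : ℝ) 1) (hx0 : x 0 ∈ C)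
    (hz : ∀ n, z n = (1 - β n) • x n + β n • T (x n))
    (hy : ∀ n, y n = T ((1 - α n) • T (x n) + α n • T (z n)))
    (hx : ∀ n, x (n + 1) = T (y n)) (n : ℕ) : x n ∈ C := by
  induction n with
  | zero => exact hx0
  | succ n ih =>
    have hzC : z n ∈ C := hz n ▸ hCcv.sub_smul_add_smul_mem ih (hTC _ ih) (hβ n)
    rw [hx n, hy n]
    exact hTC _ (hTC _ (hCcv.sub_smul_add_smul_mem (hTC _ ih) (hTC _ hzC) (hα n)))

lemma kIteration_norm_z_sub_le (hT : ∀ w ∈ C, ‖T w - p‖ ≤ ‖w - p‖)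
    (hβ : ∀ n, β n ∈ Icc (0 : ℝ) 1) (hz : ∀ n, z n = (1 - β n) • x n + β n • T (x n))
    {n : ℕ} (hxC : x n ∈ C) : ‖z n - p‖ ≤ ‖x n - p‖ :=
  calc ‖z n - p‖ ≤ (1 - β n) * ‖x n - p‖ + β n * ‖T (x n) - p‖ :=
        hz n ▸ norm_sub_smul_add_smul_sub_le (hβ n) _ _ _
    _ ≤ (1 - β n) * ‖x n - p‖ + β n * ‖x n - p‖ :=
        add_le_add_right (mul_le_mul_of_nonneg_left (hT _ hxC) (hβ n).1) _
    _ = ‖x n - p‖ := by ring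

lemma kIteration_norm_succ_sub_le (hCcv : Convex ℝ C) (hTC : ∀ w ∈ C, T w ∈ C)
    (hT : ∀ w ∈ C, ‖T w - p‖ ≤ ‖w - p‖)
    (hα : ∀ n, α n ∈ Icc (0 : ℝ) 1) (hβ : ∀ n, β n ∈ Icc (0 : ℝ) 1)
    (hz : ∀ n, z n = (1 - β n) • x n + β n • T (x n))
    (hy : ∀ n, y n = T ((1 - α n) • T (x n) + α n • T (z n)))
    (hx : ∀ n, x (n + 1) = T (y n)) {n : ℕ} (hxC : x n ∈ C) :
    ‖x (n + 1) - p‖ ≤ (1 - α n) * ‖x n - p‖ + α n * ‖z n - p‖ := by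
  have hzC : z n ∈ C := hz n ▸ hCcv.sub_smul_add_smul_mem hxC (hTC _ hxC) (hβ n)
  have hwC := hCcv.sub_smul_add_smul_mem (hTC _ hxC) (hTC _ hzC) (hα n)
  calc ‖x (n + 1) - p‖ ≤ ‖y n - p‖ := hx n ▸ hT _ (hy n ▸ hTC _ hwC)
    _ ≤ ‖(1 - α n) • T (x n) + α n • T (z n) - p‖ := hy n ▸ hT _ hwC
    _ ≤ (1 - α n) * ‖T (x n) - p‖ + α n * ‖T (z n) - p‖ :=
        norm_sub_smul_add_smul_sub_le (hα n) _ _ _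
    _ ≤ (1 - α n) * ‖x n - p‖ + α n * ‖z n - p‖ :=
        add_le_add (mul_le_mul_of_nonneg_left (hT _ hxC) (sub_nonneg.2 (hα n).2))
          (mul_le_mul_of_nonneg_left (hT _ hzC) (hα n).1)

end KIteration

theorem stmt_12_general {X : Type*} [NormedAddCommGroup X] [NormedSpace ℝ X]
    [UniformConvexSpace X]
    (C : Set X) (hCcv : Convex ℝ C)
    (T : X → X) (hTC : ∀ x ∈ C, T x ∈ C)
    (hC : ∀ x ∈ C, ∀ y ∈ C, (1 / 2) * ‖x - T x‖ ≤ ‖x - y‖ → ‖T x - T y‖ ≤ ‖x - y‖)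
    (hF : ∃ p ∈ C, T p = p)
    (a b : ℝ) (ha : 0 < a) (hb : b < 1)
    (α β : ℕ → ℝ) (hα : ∀ n, α n ∈ Set.Icc a b) (hβ : ∀ n, β n ∈ Set.Icc a b)
    (x z y : ℕ → X) (hx0 : x 0 ∈ C)
    (hz : ∀ n, z n = (1 - β n) • x n + β n • T (x n))
    (hy : ∀ n, y n = T ((1 - α n) • T (x n) + α n • T (z n)))
    (hx : ∀ n, x (n + 1) = T (y n)) :
    Bornology.IsBounded (Set.range x) ∧
      Tendsto (fun n => ‖T (x n) - x n‖) atTop (nhds 0) := by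
  obtain ⟨p, hpC, hTp⟩ := hF
  have hT : ∀ w ∈ C, ‖T w - p‖ ≤ ‖w - p‖ := fun w => norm_apply_sub_le_of_conditionC hC hpC hTp
  have hα01 : ∀ n, α n ∈ Icc (0 : ℝ) 1 := fun n => Icc_subset_Icc ha.le hb.le (hα n)
  have hβ01 : ∀ n, β n ∈ Icc (0 : ℝ) 1 := fun n => Icc_subset_Icc ha.le hb.le (hβ n)
  have hxC := kIteration_mem hCcv hTC hα01 hβ01 hx0 hz hy hx
  have hzx n : ‖z n - p‖ ≤ ‖x n - p‖ := kIteration_norm_z_sub_le hT hβ01 hz (hxC n)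
  have hstep n : a * (‖x n - p‖ - ‖z n - p‖) ≤ ‖x n - p‖ - ‖x (n + 1) - p‖ := by
    nlinarith [kIteration_norm_succ_sub_le hCcv hTC hT hα01 hβ01 hz hy hx (hxC n), (hα n).1, hzx n]
  have hanti : Antitone fun n => ‖x n - p‖ :=
    antitone_nat_of_succ_le fun n => by nlinarith [hstep n, hzx n]
  have hxlim := tendsto_atTop_ciInf hanti ⟨0, by rintro _ ⟨n, rfl⟩; exact norm_nonneg _⟩
  refine ⟨(Metric.isBounded_iff_subset_closedBall p).2 ⟨‖x 0 - p‖, ?_⟩, ?_⟩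
  · rintro _ ⟨n, rfl⟩
    exact mem_closedBall_iff_norm.2 (hanti n.zero_le)
  · have hcombo n : z n - p = (1 - β n) • (x n - p) + β n • (T (x n) - p) := by rw [hz n]; module
    have hxTx := tendsto_norm_sub_of_tendsto_norm_sub_smul_add_smul ha hb hβ (fun n => le_rfl)
      (fun n => hT _ (hxC n)) hxlim
      ((tendsto_of_mul_sub_le_sub ha hzx hstep hxlim).congr fun n => by rw [hcombo])
    exact hxTx.congr fun n => by rw [sub_sub_sub_cancel_right, norm_sub_rev]

theorem stmt_12 {X : Type*} [NormedAddCommGroup X] [NormedSpace ℝ X]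
    [UniformConvexSpace X] [CompleteSpace X]
    (C : Set X) (hCne : C.Nonempty) (hCcl : IsClosed C) (hCcv : Convex ℝ C)
    (T : X → X) (hTC : ∀ x ∈ C, T x ∈ C)
    (hC : ∀ x ∈ C, ∀ y ∈ C, (1 / 2) * ‖x - T x‖ ≤ ‖x - y‖ → ‖T x - T y‖ ≤ ‖x - y‖)
    (hF : ∃ p ∈ C, T p = p)
    (a b : ℝ) (ha : 0 < a) (hab : a ≤ b) (hb : b < 1)
    (α β : ℕ → ℝ) (hα : ∀ n, α n ∈ Set.Icc a b) (hβ : ∀ n, β n ∈ Set.Icc a b)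
    (x z y : ℕ → X) (hx0 : x 0 ∈ C)
    (hz : ∀ n, z n = (1 - β n) • x n + β n • T (x n))
    (hy : ∀ n, y n = T ((1 - α n) • T (x n) + α n • T (z n)))
    (hx : ∀ n, x (n + 1) = T (y n)) :
    Bornology.IsBounded (Set.range x) ∧
      Tendsto (fun n => ‖T (x n) - x n‖) atTop (nhds 0) :=
  stmt_12_general C hCcv T hTC hC hF a b ha hb α β hα hβ x z y hx0 hz hy hx
end

section
/- Let T : C → C satisfy condition (C) on a subset C of a Banach space X with the Opial property. If (xₙ) ⊆ C converges weakly to z and ‖Txₙ - xₙ‖ → 0, then Tz = z (demiclosedness of I - T at zero). -/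
open Filter

theorem stmt_13 {X : Type*} [NormedAddCommGroup X] [NormedSpace ℝ X] [CompleteSpace X]
    (hOpial : ∀ (u : ℕ → X) (w : X),
      (∀ f : X →L[ℝ] ℝ, Tendsto (fun n => f (u n)) atTop (nhds (f w))) →
      ∀ v : X, v ≠ w →
        limsup (fun n => ‖u n - w‖) atTop < limsup (fun n => ‖u n - v‖) atTop)
    (C : Set X) (T : X → X) (hTC : ∀ x ∈ C, T x ∈ C)
    (hC : ∀ x ∈ C, ∀ y ∈ C, (1 / 2) * ‖x - T x‖ ≤ ‖x - y‖ → ‖T x - T y‖ ≤ ‖x - y‖)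
    (x : ℕ → X) (hxC : ∀ n, x n ∈ C) (z : X) (hzC : z ∈ C)
    (hweak : ∀ f : X →L[ℝ] ℝ, Tendsto (fun n => f (x n)) atTop (nhds (f z)))
    (hlim : Tendsto (fun n => ‖T (x n) - x n‖) atTop (nhds 0)) :
    T z = z := by
  -- Step 1: boundedness via Banach–Steinhaus
  obtain ⟨M, hM⟩ : ∃ M : ℝ, ∀ n, ‖x n - z‖ ≤ M := by
    obtain ⟨M, hM⟩ := banach_steinhaus
      (g := fun n => NormedSpace.inclusionInDoubleDualLi ℝ (x n))
      (fun f => by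
        obtain ⟨c, hc⟩ := ((hweak f).norm.bddAbove_range)
        exact ⟨c, fun n => hc ⟨n, rfl⟩⟩)
    refine ⟨M + ‖z‖, fun n => ?_⟩
    have h1 : ‖x n‖ ≤ M := by
      have := hM n
      rwa [LinearIsometry.norm_map] at this
    calc ‖x n - z‖ ≤ ‖x n‖ + ‖z‖ := norm_sub_le _ _
      _ ≤ M + ‖z‖ := by linarith
  -- Step 2: Suzuki's key inequality
  have key : ∀ n, ‖x n - T z‖ ≤ 3 * ‖T (x n) - x n‖ + ‖x n - z‖ := by
    intro n
    set a := x n with ha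
    have haC := hxC n
    by_cases h : (1 / 2) * ‖a - T a‖ ≤ ‖a - z‖
    · have h1 := hC a haC z hzC h
      have h2 : ‖a - T z‖ ≤ ‖a - T a‖ + ‖T a - T z‖ := norm_sub_le_norm_sub_add_norm_sub _ _ _
      have h3 : ‖a - T a‖ = ‖T a - a‖ := norm_sub_rev _ _
      have := norm_nonneg (T a - a)
      linarith
    · push_neg at h
      have hTaC := hTC a haC
      have h1 : ‖T a - T (T a)‖ ≤ ‖a - T a‖ := by
        have := hC a haC (T a) hTaC (by nlinarith [norm_nonneg (a - T a)])
        simpa using this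
      have htri : ‖a - T a‖ ≤ ‖a - z‖ + ‖z - T a‖ := norm_sub_le_norm_sub_add_norm_sub _ _ _
      have hzTa : ‖T a - z‖ = ‖z - T a‖ := norm_sub_rev _ _
      have h2 : (1 / 2) * ‖T a - T (T a)‖ ≤ ‖T a - z‖ := by nlinarith
      have h3 := hC (T a) hTaC z hzC h2
      have h4 : ‖a - T z‖ ≤ ‖a - T a‖ + ‖T a - T (T a)‖ + ‖T (T a) - T z‖ := by
        calc ‖a - T z‖ ≤ ‖a - T (T a)‖ + ‖T (T a) - T z‖ := norm_sub_le_norm_sub_add_norm_sub _ _ _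
          _ ≤ ‖a - T a‖ + ‖T a - T (T a)‖ + ‖T (T a) - T z‖ := by
              have := norm_sub_le_norm_sub_add_norm_sub a (T a) (T (T a)); linarith
      have h5 : ‖T a - a‖ = ‖a - T a‖ := norm_sub_rev _ _
      have htri2 : ‖T a - z‖ ≤ ‖T a - a‖ + ‖a - z‖ := norm_sub_le_norm_sub_add_norm_sub _ _ _
      linarith
  -- Step 3: limsup comparison and Opial
  by_contra hne
  have hOp := hOpial x z hweak (T z) hne
  set L := limsup (fun n => ‖x n - z‖) atTop with hL
  have hbz : IsBoundedUnder (· ≤ ·) atTop (fun n => ‖x n - z‖) := isBoundedUnder_of ⟨M, hM⟩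
  have hcob : IsCoboundedUnder (· ≤ ·) atTop (fun n => ‖x n - T z‖) :=
    (isBoundedUnder_of ⟨0, fun n => norm_nonneg _⟩ :
      IsBoundedUnder (· ≥ ·) atTop (fun n => ‖x n - T z‖)).isCobounded_flip
  have hle : limsup (fun n => ‖x n - T z‖) atTop ≤ L := by
    refine le_of_forall_pos_le_add fun ε hε => ?_
    have h1 : ∀ᶠ n in atTop, ‖x n - z‖ < L + ε / 2 := by
      apply eventually_lt_of_limsup_lt _ hbz
      linarith
    have h2 : ∀ᶠ n in atTop, ‖T (x n) - x n‖ < ε / 6 := by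
      have := hlim.eventually (eventually_lt_nhds (show (0:ℝ) < ε / 6 by linarith))
      simpa using this
    refine limsup_le_of_le hcob ?_
    filter_upwards [h1, h2] with n hn1 hn2
    have := key n
    linarith
  linarith
end

section
/- Under the hypotheses of the data dependence theorem (T a θ-contraction with fixed point p, T̃ an ε-approximate operator of T with fixed point p̃, K iterations for T and T̃ with (1/2) ≤ αₙβₙ and ∑αₙβₙ = ∞, and x̃ₙ → p̃), one has ‖p - p̃‖ ≤ 7ε/(1-θ). -/
open Filter

theorem dist_fixedPoints_le_of_forall_dist_le {M : Type*} [PseudoMetricSpace M] {C : Set M}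
    {T S : M → M} {θ ε : ℝ} (hθ : θ < 1)
    (hT : ∀ x ∈ C, ∀ y ∈ C, dist (T x) (T y) ≤ θ * dist x y)
    (hTS : ∀ x ∈ C, dist (T x) (S x) ≤ ε) {p q : M} (hpC : p ∈ C) (hqC : q ∈ C)
    (hp : T p = p) (hq : S q = q) :
    dist p q ≤ ε / (1 - θ) := by
  have hrec : dist p q ≤ θ * dist p q + ε :=
    calc dist p q = dist (T p) (S q) := by rw [hp, hq]
      _ ≤ dist (T p) (T q) + dist (T q) (S q) := dist_triangle _ _ _
      _ ≤ θ * dist p q + ε := add_le_add (hT p hpC q hqC) (hTS q hqC)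
  rw [le_div_iff₀ (sub_pos.mpr hθ)]
  linarith

theorem stmt_16_general {X : Type*} [NormedAddCommGroup X]
    (C : Set X)
    (T : X → X) (θ : ℝ) (hθ : θ ∈ Set.Ioo (0:ℝ) 1)
    (hT : ∀ x ∈ C, ∀ y ∈ C, ‖T x - T y‖ ≤ θ * ‖x - y‖)
    (S : X → X) (ε : ℝ) (hε : 0 < ε)
    (hTS : ∀ x ∈ C, ‖T x - S x‖ ≤ ε)
    (p : X) (hpC : p ∈ C) (hp : T p = p)
    (x y : ℕ → X)
    (p' : X) (hp'C : p' ∈ C) (hp' : S p' = p') :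
    ‖p - p'‖ ≤ 7 * ε / (1 - θ) := by
  have hdist : dist p p' ≤ ε / (1 - θ) :=
    dist_fixedPoints_le_of_forall_dist_le hθ.2 (by simpa only [dist_eq_norm] using hT)
      (by simpa only [dist_eq_norm] using hTS) hpC hp'C hp hp'
  rw [← dist_eq_norm]
  calc dist p p' ≤ ε / (1 - θ) := hdist
    _ ≤ 7 * ε / (1 - θ) := by gcongr <;> linarith [hθ.2]

theorem stmt_16 {X : Type*} [NormedAddCommGroup X] [NormedSpace ℝ X] [CompleteSpace X]
    (C : Set X) (hCne : C.Nonempty) (hCcl : IsClosed C) (hCcv : Convex ℝ C)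
    (T : X → X) (hTC : ∀ x ∈ C, T x ∈ C) (θ : ℝ) (hθ : θ ∈ Set.Ioo (0:ℝ) 1)
    (hT : ∀ x ∈ C, ∀ y ∈ C, ‖T x - T y‖ ≤ θ * ‖x - y‖)
    (S : X → X) (hSC : ∀ x ∈ C, S x ∈ C) (ε : ℝ) (hε : 0 < ε)
    (hTS : ∀ x ∈ C, ‖T x - S x‖ ≤ ε)
    (α β : ℕ → ℝ) (hα : ∀ n, α n ∈ Set.Icc (0:ℝ) 1) (hβ : ∀ n, β n ∈ Set.Icc (0:ℝ) 1)
    (hαβ : ∀ n, (1:ℝ) / 2 ≤ α n * β n)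
    (hdiv : Tendsto (fun N => ∑ k ∈ Finset.range N, α k * β k) atTop atTop)
    (p : X) (hpC : p ∈ C) (hp : T p = p)
    (x z y : ℕ → X) (hx0 : x 0 ∈ C)
    (hz : ∀ n, z n = (1 - β n) • x n + β n • T (x n))
    (hy : ∀ n, y n = T ((1 - α n) • T (x n) + α n • T (z n)))
    (hx : ∀ n, x (n + 1) = T (y n))
    (x' z' y' : ℕ → X) (hx'0 : x' 0 ∈ C)
    (hz' : ∀ n, z' n = (1 - β n) • x' n + β n • S (x' n))
    (hy' : ∀ n, y' n = S ((1 - α n) • S (x' n) + α n • S (z' n)))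
    (hx' : ∀ n, x' (n + 1) = S (y' n))
    (p' : X) (hp'C : p' ∈ C) (hp' : S p' = p')
    (hconv : Tendsto x' atTop (nhds p')) :
    ‖p - p'‖ ≤ 7 * ε / (1 - θ) :=
  stmt_16_general C T θ hθ hT S ε hε hTS p hpC hp x y p' hp'C hp'
end

section
/- Let T : C → C be a contraction with constant θ ∈ (0,1), fixed point p, and the K iteration with ∑αₙβₙ = ∞. For any sequence (tₙ) in C, defining εₙ = ‖tₙ₊₁ - f(T,tₙ)‖ where f(T,·) is one step of the K iteration, one has: εₙ → 0 if and only if tₙ → p (T-stability of the K iteration). -/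
/-!
One K-step moves a point of `C` towards `p` by the factor `θ³`: the inner convex combinations
stay in the closed balls about `p` of radii `‖x - p‖` and `θ‖x - p‖`, and each of the two outer
applications of `T` contracts by `θ`. Hence `‖tₙ₊₁ - p‖ ≤ θ³‖tₙ - p‖ + εₙ` and
`εₙ ≤ ‖tₙ₊₁ - p‖ + θ³‖tₙ - p‖`; a geometric recursion with a null perturbation tends to zero.
-/

open Filter Topology Set

theorem le_pow_mul_add_div_of_succ_le_mul_add {a : ℕ → ℝ} {q c : ℝ} {N : ℕ}
    (hq0 : 0 ≤ q) (hq1 : q < 1) (hc : 0 ≤ c) (h : ∀ n ≥ N, a (n + 1) ≤ q * a n + c) (k : ℕ) :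
    a (N + k) ≤ q ^ k * a N + c / (1 - q) := by
  have h1q : 0 < 1 - q := by linarith
  induction k with
  | zero => simpa using div_nonneg hc h1q.le
  | succ k ih =>
    calc a (N + (k + 1)) ≤ q * a (N + k) + c := h (N + k) (Nat.le_add_right N k)
      _ ≤ q * (q ^ k * a N + c / (1 - q)) + c := by gcongr
      _ = q ^ (k + 1) * a N + c / (1 - q) := by field_simp; ring

theorem tendsto_atTop_zero_of_succ_le_mul_add {a e : ℕ → ℝ} {q : ℝ} (hq0 : 0 ≤ q) (hq1 : q < 1)
    (ha : ∀ n, 0 ≤ a n) (h : ∀ n, a (n + 1) ≤ q * a n + e n) (he : Tendsto e atTop (𝓝 0)) :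
    Tendsto a atTop (𝓝 0) := by
  refine tendsto_order.2 ⟨fun b hb => .of_forall fun n => hb.trans_le (ha n), fun δ hδ => ?_⟩
  have h1q : 0 < 1 - q := by linarith
  set c := δ * (1 - q) / 2 with hc
  obtain ⟨N, hN⟩ := eventually_atTop.1 (he.eventually (ge_mem_nhds (by positivity : 0 < c)))
  have hgeom : Tendsto (fun k => q ^ k * a N + c / (1 - q)) atTop (𝓝 (δ / 2)) := by
    have hlim : c / (1 - q) = δ / 2 := by rw [hc]; field_simp
    simpa [hlim] using
      ((tendsto_pow_atTop_nhds_zero_of_lt_one hq0 hq1).mul_const (a N)).add_const (c / (1 - q))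
  obtain ⟨K, hK⟩ := eventually_atTop.1 (hgeom.eventually (gt_mem_nhds (by linarith : δ / 2 < δ)))
  refine eventually_atTop.2 ⟨N + K, fun n hn => ?_⟩
  obtain ⟨k, rfl⟩ := Nat.exists_eq_add_of_le (le_of_add_le_left hn)
  exact (le_pow_mul_add_div_of_succ_le_mul_add hq0 hq1 (by positivity)
    (fun n hn => (h n).trans (by linarith [hN n hn])) k).trans_lt (hK k (by omega))

theorem tendsto_norm_succ_sub_iff_tendsto {X : Type*} [SeminormedAddCommGroup X]
    {g : ℕ → X → X} {t : ℕ → X} {p : X} {q : ℝ} (hq0 : 0 ≤ q) (hq1 : q < 1)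
    (hg : ∀ n, ‖g n (t n) - p‖ ≤ q * ‖t n - p‖) :
    Tendsto (fun n => ‖t (n + 1) - g n (t n)‖) atTop (𝓝 0) ↔ Tendsto t atTop (𝓝 p) := by
  constructor
  · intro hε
    rw [tendsto_iff_norm_sub_tendsto_zero]
    refine tendsto_atTop_zero_of_succ_le_mul_add hq0 hq1 (fun n => norm_nonneg _) (fun n => ?_) hε
    calc ‖t (n + 1) - p‖ ≤ ‖t (n + 1) - g n (t n)‖ + ‖g n (t n) - p‖ :=
        norm_sub_le_norm_sub_add_norm_sub _ _ _
      _ ≤ q * ‖t n - p‖ + ‖t (n + 1) - g n (t n)‖ := by linarith [hg n]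
  · intro ht
    rw [tendsto_iff_norm_sub_tendsto_zero] at ht
    have hbound : Tendsto (fun n => ‖t (n + 1) - p‖ + q * ‖t n - p‖) atTop (𝓝 0) := by
      simpa using (ht.comp (tendsto_add_atTop_nat 1)).add (ht.const_mul q)
    refine squeeze_zero (fun n => norm_nonneg _) (fun n => ?_) hbound
    calc ‖t (n + 1) - g n (t n)‖ ≤ ‖t (n + 1) - p‖ + ‖p - g n (t n)‖ :=
        norm_sub_le_norm_sub_add_norm_sub _ _ _
      _ ≤ ‖t (n + 1) - p‖ + q * ‖t n - p‖ := by rw [norm_sub_rev p]; linarith [hg n]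

section KIteration

variable {X : Type*} [NormedAddCommGroup X] [NormedSpace ℝ X]

def kIterationStep (T : X → X) (a b : ℝ) (x : X) : X :=
  T (T ((1 - a) • T x + a • T ((1 - b) • x + b • T x)))

theorem norm_kIterationStep_sub_le {C : Set X} (hC : Convex ℝ C) {T : X → X} (hTC : MapsTo T C C)
    {θ : ℝ} (hθ0 : 0 ≤ θ) (hθ1 : θ ≤ 1) {p : X} (hTp : ∀ x ∈ C, ‖T x - p‖ ≤ θ * ‖x - p‖)
    {a b : ℝ} (ha : a ∈ Icc (0 : ℝ) 1) (hb : b ∈ Icc (0 : ℝ) 1) {x : X} (hx : x ∈ C) :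
    ‖kIterationStep T a b x - p‖ ≤ θ ^ 3 * ‖x - p‖ := by
  have combo_mem {s : Set X} (hs : Convex ℝ s) {c : ℝ} (hc : c ∈ Icc (0 : ℝ) 1) {u v : X}
      (hu : u ∈ s) (hv : v ∈ s) : (1 - c) • u + c • v ∈ s :=
    hs hu hv (by linarith [hc.2]) hc.1 (by ring)
  have hball (r : ℝ) : Convex ℝ {y : X | ‖y - p‖ ≤ r} := by
    convert convex_closedBall p r using 1
    ext y
    simp [dist_eq_norm]
  set y := (1 - b) • x + b • T x
  set z := (1 - a) • T x + a • T y
  have hTx : ‖T x - p‖ ≤ θ * ‖x - p‖ := hTp x hx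
  have hyC : y ∈ C := combo_mem hC hb hx (hTC hx)
  have hy : ‖y - p‖ ≤ ‖x - p‖ :=
    combo_mem (hball _) hb (le_refl ‖x - p‖) (hTx.trans (mul_le_of_le_one_left (norm_nonneg _) hθ1))
  have hzC : z ∈ C := combo_mem hC ha (hTC hx) (hTC hyC)
  have hz : ‖z - p‖ ≤ θ * ‖x - p‖ :=
    combo_mem (hball _) ha hTx ((hTp y hyC).trans (by gcongr))
  calc ‖T (T z) - p‖ ≤ θ * ‖T z - p‖ := hTp _ (hTC hzC)
    _ ≤ θ * (θ * ‖z - p‖) := by gcongr; exact hTp z hzC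
    _ ≤ θ * (θ * (θ * ‖x - p‖)) := by gcongr
    _ = θ ^ 3 * ‖x - p‖ := by ring

end KIteration

theorem stmt_18_general {X : Type*} [NormedAddCommGroup X] [NormedSpace ℝ X]
    (C : Set X) (hCcv : Convex ℝ C)
    (T : X → X) (hTC : ∀ x ∈ C, T x ∈ C) (θ : ℝ) (hθ : θ ∈ Set.Ioo (0:ℝ) 1)
    (hT : ∀ x ∈ C, ∀ y ∈ C, ‖T x - T y‖ ≤ θ * ‖x - y‖)
    (p : X) (hpC : p ∈ C) (hp : T p = p)
    (α β : ℕ → ℝ) (hα : ∀ n, α n ∈ Set.Icc (0:ℝ) 1) (hβ : ∀ n, β n ∈ Set.Icc (0:ℝ) 1)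
    (f : ℕ → X → X)
    (hf : ∀ n t, f n t =
      T (T ((1 - α n) • T t + α n • T ((1 - β n) • t + β n • T t))))
    (t : ℕ → X) (htC : ∀ n, t n ∈ C)
    (ε : ℕ → ℝ) (hεdef : ∀ n, ε n = ‖t (n + 1) - f n (t n)‖) :
    Tendsto ε atTop (nhds 0) ↔ Tendsto t atTop (nhds p) := by
  obtain ⟨hθ0, hθ1⟩ := hθ
  have hTp : ∀ x ∈ C, ‖T x - p‖ ≤ θ * ‖x - p‖ := fun x hx => by
    simpa only [hp] using hT x hx p hpC
  rw [show ε = fun n => ‖t (n + 1) - f n (t n)‖ from funext hεdef]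
  refine tendsto_norm_succ_sub_iff_tendsto (by positivity) (pow_lt_one₀ hθ0.le hθ1 three_ne_zero)
    fun n => ?_
  rw [hf]
  exact norm_kIterationStep_sub_le hCcv hTC hθ0.le hθ1.le hTp (hα n) (hβ n) (htC n)

theorem stmt_18 {X : Type*} [NormedAddCommGroup X] [NormedSpace ℝ X] [CompleteSpace X]
    (C : Set X) (hCne : C.Nonempty) (hCcl : IsClosed C) (hCcv : Convex ℝ C)
    (T : X → X) (hTC : ∀ x ∈ C, T x ∈ C) (θ : ℝ) (hθ : θ ∈ Set.Ioo (0:ℝ) 1)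
    (hT : ∀ x ∈ C, ∀ y ∈ C, ‖T x - T y‖ ≤ θ * ‖x - y‖)
    (p : X) (hpC : p ∈ C) (hp : T p = p)
    (α β : ℕ → ℝ) (hα : ∀ n, α n ∈ Set.Icc (0:ℝ) 1) (hβ : ∀ n, β n ∈ Set.Icc (0:ℝ) 1)
    (hdiv : Tendsto (fun N => ∑ k ∈ Finset.range N, α k * β k) atTop atTop)
    (f : ℕ → X → X)
    (hf : ∀ n t, f n t =
      T (T ((1 - α n) • T t + α n • T ((1 - β n) • t + β n • T t))))
    (t : ℕ → X) (htC : ∀ n, t n ∈ C)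
    (ε : ℕ → ℝ) (hεdef : ∀ n, ε n = ‖t (n + 1) - f n (t n)‖) :
    Tendsto ε atTop (nhds 0) ↔ Tendsto t atTop (nhds p) :=
  stmt_18_general C hCcv T hTC θ hθ hT p hpC hp α β hα hβ f hf t htC ε hεdef
end
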